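/- arXiv:1405.3894 — 6 statements merged into one kernel-verified Lean document; each statement's English description precedes it below -/
import Mathlib

section
/- Let (p_t)_{t>0} be a family of Markov kernels on ℝ satisfying the Chapman–Kolmogorov equations. Then the following are equivalent. (a) There exists a family (q_t)_{t>0} of Markov kernels on ℝ satisfying the Chapman–Kolmogorov equations such that q_t(y, (−∞,x]) = p_t(x, [y,∞)) for all t > 0 and all x, y ∈ ℝ (Siegmund duality, i.e. duality of order 1). (b) For every t > 0 and y ∈ ℝ, the function x ↦ p_t(x, [y,∞)) is non-decreasing and right-continuous in x, tends to 1 as x → +∞, and tends to 0 as x → −∞. -/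
/-!
Duality forces `q_t y` to be the probability measure whose distribution function is
`x ↦ p_t x [y, ∞)`, so (b) says precisely that such measures exist; they depend measurably on `y`
because `p_t x [y, ∞)` is antitone in `y`. The Chapman–Kolmogorov equations transfer from `p`
to `q` by evaluating both sides on half-lines `(-∞, x]`, where they become the two iterated
integrals of the indicator of `{(w, z) | w ≤ z}` against `q_s y ⊗ p_t x`.
-/

open MeasureTheory ProbabilityTheory Filter Set Topology
open scoped ENNReal

def IsProbabilityCDF (f : ℝ → ℝ≥0∞) : Prop :=
  Monotone f ∧ (∀ x, ContinuousWithinAt f (Ici x) x) ∧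
    Tendsto f atTop (𝓝 1) ∧ Tendsto f atBot (𝓝 0)

lemma isProbabilityCDF_measure_Iic (μ : Measure ℝ) [IsProbabilityMeasure μ] :
    IsProbabilityCDF fun x => μ (Iic x) := by
  have hcdf : (fun x => μ (Iic x)) = ENNReal.ofReal ∘ cdf μ := funext fun x => (ofReal_cdf μ x).symm
  rw [hcdf]
  refine ⟨fun a b hab => ENNReal.ofReal_le_ofReal ((cdf μ).mono hab),
    fun x => ENNReal.continuous_ofReal.continuousAt.comp_continuousWithinAt
      ((cdf μ).right_continuous x), ?_, ?_⟩
  · rw [← ENNReal.ofReal_one]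
    exact ENNReal.tendsto_ofReal (tendsto_cdf_atTop μ)
  · rw [← ENNReal.ofReal_zero]
    exact ENNReal.tendsto_ofReal (tendsto_cdf_atBot μ)

namespace IsProbabilityCDF

lemma ne_top {f : ℝ → ℝ≥0∞} (hf : IsProbabilityCDF f) (x : ℝ) : f x ≠ ∞ :=
  ne_top_of_le_ne_top ENNReal.one_ne_top (hf.1.ge_of_tendsto hf.2.2.1 x)

variable {f : ℝ → ℝ≥0∞} (hf : IsProbabilityCDF f)

noncomputable def stieltjesFunction : StieltjesFunction ℝ where
  toFun x := (f x).toReal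
  mono' _ b hab := ENNReal.toReal_mono (hf.ne_top b) (hf.1 hab)
  right_continuous' x := (ENNReal.tendsto_toReal (hf.ne_top x)).comp (hf.2.1 x)

lemma tendsto_stieltjesFunction_atTop : Tendsto hf.stieltjesFunction atTop (𝓝 1) :=
  (ENNReal.tendsto_toReal ENNReal.one_ne_top).comp hf.2.2.1

lemma tendsto_stieltjesFunction_atBot : Tendsto hf.stieltjesFunction atBot (𝓝 0) :=
  (ENNReal.tendsto_toReal ENNReal.zero_ne_top).comp hf.2.2.2

noncomputable def measure : Measure ℝ := hf.stieltjesFunction.measure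

lemma isProbabilityMeasure : IsProbabilityMeasure hf.measure :=
  hf.stieltjesFunction.isProbabilityMeasure hf.tendsto_stieltjesFunction_atBot
    hf.tendsto_stieltjesFunction_atTop

lemma measure_Iic (x : ℝ) : hf.measure (Iic x) = f x := by
  rw [measure, StieltjesFunction.measure_Iic _ hf.tendsto_stieltjesFunction_atBot, sub_zero]
  exact ENNReal.ofReal_toReal (hf.ne_top x)

end IsProbabilityCDF

lemma lintegral_measure_Iic_eq_lintegral_measure_Ici (μ ν : Measure ℝ) [SFinite μ] [SFinite ν] :
    ∫⁻ z, μ (Iic z) ∂ν = ∫⁻ w, ν (Ici w) ∂μ := by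
  have hle : MeasurableSet {p : ℝ × ℝ | p.1 ≤ p.2} := measurableSet_le measurable_fst measurable_snd
  exact (Measure.prod_apply_symm (μ := μ) (ν := ν) hle).symm.trans (Measure.prod_apply hle)

namespace ProbabilityTheory.Kernel

def IsSiegmundDual (κ' κ : Kernel ℝ ℝ) : Prop :=
  ∀ x y, κ' y (Iic x) = κ x (Ici y)

lemma IsSiegmundDual.isProbabilityCDF {κ' κ : Kernel ℝ ℝ} [IsMarkovKernel κ']
    (h : IsSiegmundDual κ' κ) (y : ℝ) : IsProbabilityCDF fun x => κ x (Ici y) := by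
  simpa only [← h _ y] using isProbabilityCDF_measure_Iic (κ' y)

lemma measurable_isProbabilityCDF_measure {κ : Kernel ℝ ℝ}
    (h : ∀ y, IsProbabilityCDF fun x => κ x (Ici y)) : Measurable fun y => (h y).measure := by
  have := fun y => (h y).isProbabilityMeasure
  refine .measure_of_isPiSystem_of_isProbabilityMeasure (borel_eq_generateFrom_Iic ℝ)
    isPiSystem_Iic ?_
  rintro _ ⟨x, rfl⟩
  simp only [IsProbabilityCDF.measure_Iic]
  exact Antitone.measurable fun _ _ hy => measure_mono (Ici_subset_Ici.2 hy)

open Classical in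
noncomputable def siegmundDual (κ : Kernel ℝ ℝ) : Kernel ℝ ℝ :=
  if h : ∀ y, IsProbabilityCDF fun x => κ x (Ici y) then
    ⟨fun y => (h y).measure, measurable_isProbabilityCDF_measure h⟩
  else 0

lemma isSiegmundDual_siegmundDual {κ : Kernel ℝ ℝ}
    (h : ∀ y, IsProbabilityCDF fun x => κ x (Ici y)) : IsSiegmundDual κ.siegmundDual κ := by
  intro x y
  simp only [siegmundDual, dif_pos h]
  exact (h y).measure_Iic x

lemma isMarkovKernel_siegmundDual {κ : Kernel ℝ ℝ}
    (h : ∀ y, IsProbabilityCDF fun x => κ x (Ici y)) : IsMarkovKernel κ.siegmundDual := by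
  refine ⟨fun y => ?_⟩
  simp only [siegmundDual, dif_pos h]
  exact (h y).isProbabilityMeasure

lemma IsSiegmundDual.eq_comp {κ η ρ κ' η' ρ' : Kernel ℝ ℝ}
    [IsSFiniteKernel κ] [IsSFiniteKernel η'] [IsFiniteKernel ρ']
    (hκ : IsSiegmundDual κ' κ) (hη : IsSiegmundDual η' η) (hρ : IsSiegmundDual ρ' ρ)
    (hcomp : ∀ x y, ρ x (Ici y) = ∫⁻ z, η z (Ici y) ∂κ x) :
    ρ' = κ' ∘ₖ η' := by
  ext1 y
  refine Measure.ext_of_Iic _ _ fun x => ?_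
  calc ρ' y (Iic x) = ∫⁻ z, η' y (Iic z) ∂κ x := by
        rw [hρ, hcomp]
        exact lintegral_congr fun z => (hη z y).symm
    _ = ∫⁻ w, κ x (Ici w) ∂η' y := lintegral_measure_Iic_eq_lintegral_measure_Ici _ _
    _ = ∫⁻ w, κ' w (Iic x) ∂η' y := lintegral_congr fun w => (hκ x w).symm
    _ = (κ' ∘ₖ η') y (Iic x) := (comp_apply' _ _ _ measurableSet_Iic).symm

end ProbabilityTheory.Kernel

open ProbabilityTheory.Kernel

theorem stmt4
    (p : ℝ → Kernel ℝ ℝ)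
    (hp_markov : ∀ t, 0 < t → IsMarkovKernel (p t))
    -- Chapman–Kolmogorov for p
    (hCK : ∀ s t, 0 < s → 0 < t → ∀ x, ∀ A : Set ℝ, MeasurableSet A →
      p (t + s) x A = ∫⁻ z, p s z A ∂(p t x)) :
    -- (a) Siegmund dual exists
    (∃ q : ℝ → Kernel ℝ ℝ,
      (∀ t, 0 < t → IsMarkovKernel (q t)) ∧
      (∀ s t, 0 < s → 0 < t → ∀ y, ∀ A : Set ℝ, MeasurableSet A →
        q (t + s) y A = ∫⁻ w, q t w A ∂(q s y)) ∧
      (∀ t, 0 < t → ∀ x y : ℝ, q t y (Set.Iic x) = p t x (Set.Ici y)))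
    ↔
    -- (b) stochastic monotonicity, right continuity and limits at ±∞
    (∀ t, 0 < t → ∀ y : ℝ,
      Monotone (fun x => p t x (Set.Ici y)) ∧
      (∀ x : ℝ, ContinuousWithinAt (fun x' => p t x' (Set.Ici y)) (Set.Ici x) x) ∧
      Tendsto (fun x => p t x (Set.Ici y)) atTop (nhds 1) ∧
      Tendsto (fun x => p t x (Set.Ici y)) atBot (nhds 0)) := by
  constructor
  · rintro ⟨q, hq_markov, -, hdual⟩ t ht y
    have := hq_markov t ht
    exact IsSiegmundDual.isProbabilityCDF (hdual t ht) y
  · intro hcdf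
    have hq_markov t (ht : 0 < t) := isMarkovKernel_siegmundDual (hcdf t ht)
    have hdual t (ht : 0 < t) := isSiegmundDual_siegmundDual (hcdf t ht)
    refine ⟨fun t => (p t).siegmundDual, hq_markov, fun s t hs ht y A hA => ?_, hdual⟩
    have := hp_markov t ht
    have := hq_markov s hs
    have := hq_markov (t + s) (add_pos ht hs)
    dsimp only
    rw [(hdual t ht).eq_comp (hdual s hs) (hdual (t + s) (add_pos ht hs))
      fun x y => hCK s t hs ht x _ measurableSet_Ici, comp_apply' _ _ _ hA]
end

section
/- Let (p_t)_{t>0} be a family of Markov kernels on ℝ satisfying the Chapman–Kolmogorov equations such that ∫_ℝ (z−y)_+ p_t(x,dz) < ∞ for all t > 0 and x,y ∈ ℝ, and set h_{t,y}(x) = ∫_ℝ (z−y)_+ p_t(x,dz). Then the following are equivalent. (a) There exists a family (q_t)_{t>0} of Markov kernels on ℝ satisfying the Chapman–Kolmogorov equations such that ∫_ℝ (x−w)_+ q_t(y,dw) = h_{t,y}(x) for all t > 0 and x,y ∈ ℝ (put–call symmetry, i.e. duality of order 2). (b) For every t > 0 and y ∈ ℝ, the function x ↦ h_{t,y}(x)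 is convex on ℝ, h_{t,y}(x) → 0 as x → −∞, and the right derivative of h_{t,y} tends to 1 as x → +∞. -/
/-!
For a probability measure `μ` on `ℝ` with finite put prices, the put price
`P(x) = ∫ (x - w)₊ dμ(w)` is convex, tends to `0` at `-∞`, and its right derivative is the
distribution function `μ (-∞, x]`; this gives (a) ⇒ (b), and shows that `μ` is determined by `P`.

Conversely, under (b) the right derivative of the convex function `h t y` is a distribution
function; by the layer-cake formula the law `q t y` it defines has put prices `h t y`. Duality is
inherited by compositions (Tonelli):
`∫∫ (x - w)₊ q_t(v, dw) q_s(y, dv) = ∫∫ (z - v)₊ q_s(y, dv) p_t(x, dz)`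
`                                  = ∫∫ (u - y)₊ p_s(z, du) p_t(x, dz)`,
so `q_t ∘ q_s` and `q_{t+s}` are both dual to `p_{t+s} = p_s ∘ p_t`, hence equal.
-/

open MeasureTheory ProbabilityTheory Filter Set Topology

noncomputable section

namespace ConvexOn

variable {g : ℝ → ℝ} (hg : ConvexOn ℝ univ g)
include hg

lemma continuous_of_univ : Continuous g :=
  continuousOn_univ.1 (hg.continuousOn isOpen_univ)

lemma hasDerivWithinAt_rightDeriv (x : ℝ) :
    HasDerivWithinAt g (derivWithin g (Ioi x) x) (Ioi x) x :=
  hg.hasDerivWithinAt_rightDeriv_of_mem_interior (by simp)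

lemma monotone_rightDeriv : Monotone fun x => derivWithin g (Ioi x) x :=
  fun x y hxy => hg.monotoneOn_rightDeriv (by simp) (by simp) hxy

lemma slope_le_rightDeriv_of_lt {x y : ℝ} (hxy : x < y) : slope g x y ≤ derivWithin g (Ioi y) y :=
  (hg.slope_le_leftDeriv_of_mem_interior (mem_univ x) (by simp) hxy).trans
    (hg.leftDeriv_le_rightDeriv_of_mem_interior (by simp))

lemma rightDeriv_le_slope_of_lt {x y : ℝ} (hxy : x < y) : derivWithin g (Ioi x) x ≤ slope g x y :=
  hg.rightDeriv_le_slope_of_mem_interior (by simp) (mem_univ y) hxy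

lemma continuousWithinAt_rightDeriv (x : ℝ) :
    ContinuousWithinAt (fun x => derivWithin g (Ioi x) x) (Ici x) x := by
  rw [← continuousWithinAt_Ioi_iff_Ici, ContinuousWithinAt, tendsto_order]
  refine ⟨fun a ha => ?_, fun b hb => ?_⟩
  · filter_upwards [self_mem_nhdsWithin] with u (hu : x < u)
    exact ha.trans_le (hg.monotone_rightDeriv hu.le)
  · -- for `x < u < v`, the right derivative at `u` is at most `slope g u v → slope g x v < b`
    obtain ⟨v, hv, hxv : x < v⟩ := (((hasDerivWithinAt_iff_tendsto_slope' self_notMem_Ioi).1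
      (hg.hasDerivWithinAt_rightDeriv x)).eventually (gt_mem_nhds hb)).and
      self_mem_nhdsWithin |>.exists
    have hcont : Tendsto (fun u => slope g u v) (𝓝[>] x) (𝓝 (slope g x v)) := by
      simp only [slope_def_field]
      exact ((tendsto_const_nhds.sub (hg.continuous_of_univ.tendsto x)).div
        (tendsto_const_nhds.sub tendsto_id) (sub_ne_zero.2 hxv.ne')).mono_left
        nhdsWithin_le_nhds
    filter_upwards [hcont.eventually (gt_mem_nhds hv), Ioo_mem_nhdsGT hxv] with u hu hxu
    exact (hg.rightDeriv_le_slope_of_lt hxu.2).trans_lt hu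

def rightDerivStieltjes : StieltjesFunction ℝ where
  toFun x := derivWithin g (Ioi x) x
  mono' := hg.monotone_rightDeriv
  right_continuous' := hg.continuousWithinAt_rightDeriv

lemma integral_rightDeriv {a b : ℝ} (hab : a ≤ b) :
    ∫ u in a..b, derivWithin g (Ioi u) u = g b - g a :=
  intervalIntegral.integral_eq_sub_of_hasDeriv_right_of_le hab
    hg.continuous_of_univ.continuousOn (fun u _ => hg.hasDerivWithinAt_rightDeriv u)
    (hg.monotone_rightDeriv.intervalIntegrable)

variable (h0 : Tendsto g atBot (𝓝 0))
include h0

lemma tendsto_rightDeriv_atBot : Tendsto (fun x => derivWithin g (Ioi x) x) atBot (𝓝 0) := by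
  -- squeezed between `g x - g (x - 1)` and `g (x + 1) - g x`
  have hshift : ∀ c : ℝ, Tendsto (fun x => g (x + c)) atBot (𝓝 0) := fun c =>
    h0.comp (tendsto_atBot_add_const_right _ c tendsto_id)
  refine tendsto_of_tendsto_of_tendsto_of_le_of_le
    (by simpa using (hshift 0).sub (hshift (-1))) (by simpa using (hshift 1).sub (hshift 0))
    (fun x => ?_) (fun x => ?_)
  · simpa [slope_def_field, sub_eq_add_neg] using hg.slope_le_rightDeriv_of_lt (sub_one_lt x)
  · simpa [slope_def_field] using hg.rightDeriv_le_slope_of_lt (lt_add_one x)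

lemma rightDeriv_nonneg (x : ℝ) : 0 ≤ derivWithin g (Ioi x) x :=
  hg.monotone_rightDeriv.le_of_tendsto (hg.tendsto_rightDeriv_atBot h0) x

lemma lintegral_rightDeriv_Iio (x : ℝ) :
    ∫⁻ u in Iio x, ENNReal.ofReal (derivWithin g (Ioi u) u) = ENNReal.ofReal (g x) := by
  refine (aecover_Ioi (μ := volume.restrict (Iio x)) tendsto_id).lintegral_eq_of_tendsto _
    (hg.monotone_rightDeriv.measurable.ennreal_ofReal.aemeasurable) ?_
  have hIoc : ∀ a ≤ x, ∫⁻ u in Ioi a, ENNReal.ofReal (derivWithin g (Ioi u) u)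
      ∂volume.restrict (Iio x) = ENNReal.ofReal (g x - g a) := fun a ha => by
    rw [Measure.restrict_restrict measurableSet_Ioi, Ioi_inter_Iio,
      setLIntegral_congr Ioo_ae_eq_Ioc, ← ofReal_integral_eq_lintegral_ofReal,
      ← intervalIntegral.integral_of_le ha, hg.integral_rightDeriv ha]
    · exact (intervalIntegrable_iff_integrableOn_Ioc_of_le ha).1
        hg.monotone_rightDeriv.intervalIntegrable
    · exact .of_forall (hg.rightDeriv_nonneg h0)
  have := (ENNReal.continuous_ofReal.tendsto _).comp (tendsto_const_nhds (x := g x) |>.sub h0)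
  rw [sub_zero] at this
  exact this.congr' ((eventually_le_atBot x).mono fun a ha => (hIoc a ha).symm)

end ConvexOn

def putPrice (μ : Measure ℝ) (x : ℝ) : ℝ := ∫ w, max (x - w) 0 ∂μ

section PutPrice

variable {μ : Measure ℝ}

lemma convexOn_putPrice (hi : ∀ x, Integrable (fun w => max (x - w) 0) μ) :
    ConvexOn ℝ univ (putPrice μ) :=
  integral_convexOn_of_integrand_ae convex_univ
    (ae_of_all _ fun w => ((convexOn_id convex_univ).sub (concaveOn_const w convex_univ)).sup
      (convexOn_const 0 convex_univ))
    fun x _ => hi x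

lemma tendsto_putPrice_atBot (hi : ∀ x, Integrable (fun w => max (x - w) 0) μ) :
    Tendsto (putPrice μ) atBot (𝓝 0) := by
  have key : Tendsto (putPrice μ) atBot (𝓝 (∫ _, (0 : ℝ) ∂μ)) := by
    refine tendsto_integral_filter_of_dominated_convergence (fun w => max (0 - w) 0)
      (.of_forall fun x => (hi x).aestronglyMeasurable) ?_ (hi 0) (.of_forall fun w => ?_)
    · filter_upwards [eventually_le_atBot 0] with x hx
      refine .of_forall fun w => ?_
      rw [Real.norm_of_nonneg (le_max_right _ _)]
      exact max_le_max (by linarith) le_rfl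
    · refine tendsto_const_nhds.congr' ?_
      filter_upwards [eventually_le_atBot w] with x hx
      exact (max_eq_right (by linarith)).symm
  simpa using key

lemma max_sub_max_mem_Icc {x u w : ℝ} (hxu : x ≤ u) :
    max (u - w) 0 - max (x - w) 0 ∈
      Icc ((Iic x).indicator (fun _ => u - x) w) ((Iic u).indicator (fun _ => u - x) w) := by
  simp only [indicator, mem_Iic, mem_Icc]
  constructor <;> split_ifs <;> simp only [max_def] <;> split_ifs <;> linarith

lemma integrable_put_of_lintegral_ne_top {x : ℝ}
    (h : ∫⁻ w, ENNReal.ofReal (max (x - w) 0) ∂μ ≠ ⊤) : Integrable (fun w => max (x - w) 0) μ :=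
  (lintegral_ofReal_ne_top_iff_integrable (by fun_prop) (.of_forall fun _ => le_max_right _ _)).1 h

lemma putPrice_eq_toReal_lintegral (x : ℝ) :
    putPrice μ x = (∫⁻ w, ENNReal.ofReal (max (x - w) 0) ∂μ).toReal :=
  integral_eq_lintegral_of_nonneg_ae (.of_forall fun _ => le_max_right _ _) (by fun_prop)

lemma integrable_put_and_putPrice_eq_of_lintegral_eq {x c : ℝ} (hc : 0 ≤ c)
    (h : ∫⁻ w, ENNReal.ofReal (max (x - w) 0) ∂μ = ENNReal.ofReal c) :
    Integrable (fun w => max (x - w) 0) μ ∧ putPrice μ x = c :=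
  ⟨integrable_put_of_lintegral_ne_top (h ▸ ENNReal.ofReal_ne_top),
    by rw [putPrice_eq_toReal_lintegral, h, ENNReal.toReal_ofReal hc]⟩

variable [IsProbabilityMeasure μ]

lemma putPrice_sub_mem_Icc (hi : ∀ x, Integrable (fun w => max (x - w) 0) μ) {x u : ℝ}
    (hxu : x ≤ u) :
    putPrice μ u - putPrice μ x ∈ Icc ((u - x) * cdf μ x) ((u - x) * cdf μ u) := by
  have hint : ∀ v, ∫ w, (Iic v).indicator (fun _ => u - x) w ∂μ = (u - x) * cdf μ v := fun v => by
    rw [integral_indicator_const _ measurableSet_Iic, cdf_eq_real, smul_eq_mul, mul_comm]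
  have hind : ∀ v, Integrable (fun w => (Iic v).indicator (fun _ => u - x) w) μ := fun v =>
    (integrable_const _).indicator measurableSet_Iic
  rw [putPrice, putPrice, ← integral_sub (hi u) (hi x), ← hint, ← hint]
  exact ⟨integral_mono (hind x) ((hi u).sub (hi x)) fun w => (max_sub_max_mem_Icc hxu).1,
    integral_mono ((hi u).sub (hi x)) (hind u) fun w => (max_sub_max_mem_Icc hxu).2⟩

lemma hasDerivWithinAt_putPrice (hi : ∀ x, Integrable (fun w => max (x - w) 0) μ) (x : ℝ) :
    HasDerivWithinAt (putPrice μ) (cdf μ x) (Ioi x) x := by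
  rw [hasDerivWithinAt_iff_tendsto_slope' self_notMem_Ioi]
  have hright : Tendsto (cdf μ) (𝓝[>] x) (𝓝 (cdf μ x)) :=
    ((cdf μ).right_continuous x).mono Ioi_subset_Ici_self
  refine tendsto_of_tendsto_of_tendsto_of_le_of_le' tendsto_const_nhds hright ?_ ?_ <;>
    filter_upwards [self_mem_nhdsWithin] with u (hu : x < u)
  · rw [slope_def_field, le_div_iff₀ (sub_pos.2 hu)]
    linarith [(putPrice_sub_mem_Icc hi hu.le).1]
  · rw [slope_def_field, div_le_iff₀ (sub_pos.2 hu)]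
    linarith [(putPrice_sub_mem_Icc hi hu.le).2]

lemma rightDeriv_putPrice (hi : ∀ x, Integrable (fun w => max (x - w) 0) μ) (x : ℝ) :
    derivWithin (putPrice μ) (Ioi x) x = cdf μ x :=
  (hasDerivWithinAt_putPrice hi x).derivWithin (uniqueDiffWithinAt_Ioi x)

lemma eq_of_putPrice_eq {ν : Measure ℝ} [IsProbabilityMeasure ν]
    (hiμ : ∀ x, Integrable (fun w => max (x - w) 0) μ)
    (hiν : ∀ x, Integrable (fun w => max (x - w) 0) ν) (h : putPrice μ = putPrice ν) : μ = ν :=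
  Measure.eq_of_cdf μ ν <| StieltjesFunction.ext fun x => by
    rw [← rightDeriv_putPrice hiμ, h, rightDeriv_putPrice hiν]

lemma eq_of_lintegral_put_eq {ν : Measure ℝ} [IsProbabilityMeasure ν]
    (h : ∀ x, ∫⁻ w, ENNReal.ofReal (max (x - w) 0) ∂μ = ∫⁻ w, ENNReal.ofReal (max (x - w) 0) ∂ν)
    (hfin : ∀ x, ∫⁻ w, ENNReal.ofReal (max (x - w) 0) ∂μ ≠ ⊤) : μ = ν :=
  eq_of_putPrice_eq (fun x => integrable_put_of_lintegral_ne_top (hfin x))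
    (fun x => integrable_put_of_lintegral_ne_top (h x ▸ hfin x))
    (funext fun x => by rw [putPrice_eq_toReal_lintegral, putPrice_eq_toReal_lintegral, h])

end PutPrice

lemma lintegral_put_eq_lintegral_measure_Iic (μ : Measure ℝ) (x : ℝ) :
    ∫⁻ w, ENNReal.ofReal (max (x - w) 0) ∂μ = ∫⁻ u in Iio x, μ (Iic u) := by
  rw [lintegral_eq_lintegral_meas_le μ (f := fun w => max (x - w) 0)
    (.of_forall fun w => le_max_right _ _) (by fun_prop)]
  have hlevel : ∀ t ∈ Ioi (0 : ℝ), μ {w | t ≤ max (x - w) 0} = μ (Iic (x - t)) := fun t ht => by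
    congr 1; ext w; simp [le_sub_comm, (mem_Ioi.1 ht).not_ge]
  rw [setLIntegral_congr_fun measurableSet_Ioi hlevel]
  have := (Measure.measurePreserving_sub_left volume x).setLIntegral_comp_preimage_emb
    (MeasurableEquiv.subLeft x).measurableEmbedding (fun u => μ (Iic u)) (Iio x)
  simpa using this

lemma antitone_integral_call {ν : Measure ℝ} (hi : ∀ y, Integrable (fun z => max (z - y) 0) ν) :
    Antitone fun y => ∫ z, max (z - y) 0 ∂ν :=
  antitoneOn_univ.1 <| integral_antitoneOn_of_integrand_ae
    (.of_forall fun _ _ _ _ _ hab => max_le_max (by linarith) le_rfl) fun y _ => hi y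

lemma measurable_rightDeriv_of_convexOn {G : ℝ → ℝ → ℝ} (hconv : ∀ y, ConvexOn ℝ univ (G y))
    (hmeas : ∀ x, Measurable fun y => G y x) (x : ℝ) :
    Measurable fun y => derivWithin (G y) (Ioi x) x := by
  have hseq : Tendsto (fun n : ℕ => x + 1 / (n + 1)) atTop (𝓝[>] x) :=
    tendsto_nhdsWithin_iff.2 ⟨by simpa using tendsto_one_div_add_atTop_nhds_zero_nat.const_add x,
      .of_forall fun n => by simp only [mem_Ioi, lt_add_iff_pos_right]; positivity⟩
  refine measurable_of_tendsto_metrizable (f := fun n y => slope (G y) x (x + 1 / (n + 1)))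
    (fun n => ?_) (tendsto_pi_nhds.2 fun y => ?_)
  · simp only [slope_def_field]
    exact ((hmeas _).sub (hmeas x)).div_const _
  · exact ((hasDerivWithinAt_iff_tendsto_slope' self_notMem_Ioi).1
      ((hconv y).hasDerivWithinAt_rightDeriv x)).comp hseq

lemma exists_isMarkovKernel_lintegral_put_eq {G : ℝ → ℝ → ℝ}
    (hconv : ∀ y, ConvexOn ℝ univ (G y)) (h0 : ∀ y, Tendsto (G y) atBot (𝓝 0))
    (h1 : ∀ y, Tendsto (fun x => derivWithin (G y) (Ioi x) x) atTop (𝓝 1))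
    (hmeas : ∀ x, Measurable fun y => G y x) :
    ∃ η : Kernel ℝ ℝ, IsMarkovKernel η ∧
      ∀ y x, ∫⁻ w, ENNReal.ofReal (max (x - w) 0) ∂η y = ENNReal.ofReal (G y x) := by
  set μ : ℝ → Measure ℝ := fun y => (hconv y).rightDerivStieltjes.measure
  have hμ : ∀ y, IsProbabilityMeasure (μ y) := fun y =>
    StieltjesFunction.isProbabilityMeasure _ ((hconv y).tendsto_rightDeriv_atBot (h0 y)) (h1 y)
  have hIic : ∀ y u, μ y (Iic u) = ENNReal.ofReal (derivWithin (G y) (Ioi u) u) := fun y u => by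
    rw [StieltjesFunction.measure_Iic _ ((hconv y).tendsto_rightDeriv_atBot (h0 y)), sub_zero]
    rfl
  have hμmeas : Measurable μ := by
    refine .measure_of_isPiSystem_of_isProbabilityMeasure (borel_eq_generateFrom_Iic ℝ)
      isPiSystem_Iic ?_
    rintro _ ⟨u, rfl⟩
    simp_rw [hIic]
    exact (measurable_rightDeriv_of_convexOn hconv hmeas u).ennreal_ofReal
  refine ⟨⟨μ, hμmeas⟩, ⟨hμ⟩, fun y x => ?_⟩
  rw [Kernel.coe_mk, lintegral_put_eq_lintegral_measure_Iic]
  simp_rw [hIic]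
  exact (hconv y).lintegral_rightDeriv_Iio (h0 y) x

-- Lower integrals, so that duality makes sense before any integrability is known.
def IsPutCallDual (κ η : Kernel ℝ ℝ) : Prop :=
  ∀ x y, ∫⁻ w, ENNReal.ofReal (max (x - w) 0) ∂η y = ∫⁻ z, ENNReal.ofReal (max (z - y) 0) ∂κ x

lemma IsPutCallDual.comp {κ₁ κ₂ η₁ η₂ : Kernel ℝ ℝ} [IsSFiniteKernel κ₁] [IsSFiniteKernel η₂]
    (h₁ : IsPutCallDual κ₁ η₁) (h₂ : IsPutCallDual κ₂ η₂) :
    IsPutCallDual (κ₂ ∘ₖ κ₁) (η₁ ∘ₖ η₂) := fun x y =>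
  calc ∫⁻ w, ENNReal.ofReal (max (x - w) 0) ∂(η₁ ∘ₖ η₂) y
      = ∫⁻ v, ∫⁻ w, ENNReal.ofReal (max (x - w) 0) ∂η₁ v ∂η₂ y :=
        Kernel.lintegral_comp _ _ _ (by fun_prop)
    _ = ∫⁻ v, ∫⁻ z, ENNReal.ofReal (max (z - v) 0) ∂κ₁ x ∂η₂ y := by simp_rw [h₁ x]
    _ = ∫⁻ z, ∫⁻ v, ENNReal.ofReal (max (z - v) 0) ∂η₂ y ∂κ₁ x :=
        lintegral_lintegral_swap (by fun_prop)
    _ = ∫⁻ z, ∫⁻ u, ENNReal.ofReal (max (u - y) 0) ∂κ₂ z ∂κ₁ x := by simp_rw [h₂ _ y]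
    _ = ∫⁻ u, ENNReal.ofReal (max (u - y) 0) ∂(κ₂ ∘ₖ κ₁) x :=
        (Kernel.lintegral_comp _ _ _ (by fun_prop)).symm

lemma IsPutCallDual.unique {κ η η' : Kernel ℝ ℝ} [IsMarkovKernel η] [IsMarkovKernel η']
    (h : IsPutCallDual κ η) (h' : IsPutCallDual κ η')
    (hfin : ∀ x y, ∫⁻ z, ENNReal.ofReal (max (z - y) 0) ∂κ x ≠ ⊤) : η = η' :=
  Kernel.ext fun y =>
    eq_of_lintegral_put_eq (fun x => (h x y).trans (h' x y).symm) fun x => h x y ▸ hfin x y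

theorem stmt6
    (p : ℝ → Kernel ℝ ℝ)
    (hp_markov : ∀ t, 0 < t → IsMarkovKernel (p t))
    -- Chapman–Kolmogorov for p
    (hCK : ∀ s t, 0 < s → 0 < t → ∀ x, ∀ A : Set ℝ, MeasurableSet A →
      p (t + s) x A = ∫⁻ z, p s z A ∂(p t x))
    -- call prices are finite
    (hint : ∀ t, 0 < t → ∀ x y : ℝ, Integrable (fun z => max (z - y) 0) (p t x))
    -- h_{t,y}(x) = E (X_t^x - y)_+
    (h : ℝ → ℝ → ℝ → ℝ)
    (hdef : ∀ t y x, h t y x = ∫ z, max (z - y) 0 ∂(p t x)) :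
    -- (a) a dual of order 2 exists
    (∃ q : ℝ → Kernel ℝ ℝ,
      (∀ t, 0 < t → IsMarkovKernel (q t)) ∧
      (∀ s t, 0 < s → 0 < t → ∀ y, ∀ A : Set ℝ, MeasurableSet A →
        q (t + s) y A = ∫⁻ w, q t w A ∂(q s y)) ∧
      (∀ t, 0 < t → ∀ x y : ℝ,
        Integrable (fun w => max (x - w) 0) (q t y) ∧
        (∫ w, max (x - w) 0 ∂(q t y)) = h t y x))
    ↔
    -- (b) convexity plus boundary behaviour
    (∀ t, 0 < t → ∀ y : ℝ,
      ConvexOn ℝ Set.univ (h t y) ∧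
      Tendsto (fun x => h t y x) atBot (nhds 0) ∧
      Tendsto (fun x => derivWithin (h t y) (Set.Ioi x) x) atTop (nhds 1)) := by
  constructor
  · rintro ⟨q, hq, -, hput⟩ t ht y
    have := (hq t ht).isProbabilityMeasure y
    have hi (x : ℝ) := (hput t ht x y).1
    rw [show h t y = putPrice (q t y) from funext fun x => (hput t ht x y).2.symm]
    simp only [rightDeriv_putPrice hi]
    exact ⟨convexOn_putPrice hi, tendsto_putPrice_atBot hi, tendsto_cdf_atTop _⟩
  · intro hb
    have hcall (t) (ht : 0 < t) (x y : ℝ) :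
        ∫⁻ z, ENNReal.ofReal (max (z - y) 0) ∂p t x = ENNReal.ofReal (h t y x) := by
      rw [hdef, ofReal_integral_eq_lintegral_ofReal (hint t ht x y)
        (.of_forall fun _ => le_max_right _ _)]
    have hdual (t) (ht : 0 < t) : ∃ q : Kernel ℝ ℝ, IsMarkovKernel q ∧ IsPutCallDual (p t) q := by
      obtain ⟨q, hq, hput⟩ := exists_isMarkovKernel_lintegral_put_eq (fun y => (hb t ht y).1)
        (fun y => (hb t ht y).2.1) (fun y => (hb t ht y).2.2)
        (fun x => by simpa only [hdef] using (antitone_integral_call (hint t ht x)).measurable)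
      exact ⟨q, hq, fun x y => by rw [hput, hcall t ht]⟩
    choose! q hq hqp using hdual
    refine ⟨q, hq, fun s t hs ht y A hA => ?_, fun t ht x y => ?_⟩
    · have := hp_markov t ht; have := hq s hs; have := hq t ht
      have := hq (t + s) (add_pos ht hs)
      have hpCK : p (t + s) = p s ∘ₖ p t := Kernel.ext fun x => Measure.ext fun A hA => by
        rw [Kernel.comp_apply' _ _ _ hA, hCK s t hs ht x A hA]
      have hqCK : q (t + s) = q t ∘ₖ q s :=
        (hqp _ (add_pos ht hs)).unique (hpCK ▸ (hqp t ht).comp (hqp s hs))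
          fun x y => hcall _ (add_pos ht hs) x y ▸ ENNReal.ofReal_ne_top
      rw [hqCK, Kernel.comp_apply' _ _ _ hA]
    · exact integrable_put_and_putPrice_eq_of_lintegral_eq
        (hdef t y x ▸ integral_nonneg fun _ => le_max_right _ _)
        ((hqp t ht x y).trans (hcall t ht x y))
end
end

section
/- Let k ∈ (0,1). Let (p_t)_{t>0} be a family of Markov kernels on ℝ satisfying the Chapman–Kolmogorov equations such that for each t > 0 the kernel p_t has a bounded jointly measurable density ρ_t(x,z) with respect to Lebesgue measure: p_t(x,dz) = ρ_t(x,z) dz. Let (q_t)_{t>0} be a family of Markov kernels on ℝ such that for all t > 0 and x,y ∈ ℝ, ∫_ℝ f_k(x,w) q_t(y,dw) = ∫_ℝ f_k(z,y) ρ_t(x,z) dz, both sides being finite. Then (q_t) satisfies the Chapman–Kolmogorov equations: q_{t+s}(y,A) = ∫_ℝ q_t(w,A) q_s(y,dw) for all s,t > 0, y ∈ ℝ and Borel A; i.e. the order-k dual family is itself Markov. -/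
/-!
Call `q` dual to `p` when `∫ f_k(x,w) q(y,dw) = ∫ f_k(z,y) p(x,dz)`. By Tonelli, duality reverses
composition: if `q₁, q₂` are dual to `p₁, p₂`, then `q₂ ∘ q₁` is dual to `p₁ ∘ p₂`. Hence both
`q_{t+s}` and `q_t ∘ q_s` are dual to `p_s ∘ p_t = p_{t+s}`, and it remains to see that a finite
measure `μ` is determined by its transform `x ↦ ∫ f_k(x,w) μ(dw)`. Integrating the transform
against `f_{1-k}(t,x) dx` and swapping the integrals gives `B(k,1-k) μ(-∞,t)`, because
`∫ f_k(x,w) f_{1-k}(t,x) dx = B(k,1-k)` for every `w < t` by an affine change of variables.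
-/

open MeasureTheory ProbabilityTheory

/-- The duality function of order `k ∈ (0,1)`: `f_k(x,y) = (x-y)^{k-1}` for `x > y`
and `0` for `x ≤ y`. -/
noncomputable def fdual0 (k : ℝ) (x y : ℝ) : ℝ :=
  if y < x then (x - y) ^ (k - 1) else 0

open Set ENNReal

lemma fdual0_nonneg (k x y : ℝ) : 0 ≤ fdual0 k x y := by
  unfold fdual0
  split_ifs with h
  · exact Real.rpow_nonneg (sub_nonneg.2 h.le) _
  · exact le_rfl

lemma fdual0_of_le (k : ℝ) {x y : ℝ} (h : x ≤ y) : fdual0 k x y = 0 :=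
  if_neg h.not_gt

lemma fdual0_affine (k : ℝ) {a : ℝ} (ha : 0 < a) (w x y : ℝ) :
    fdual0 k (w + a * x) (w + a * y) = a ^ (k - 1) * fdual0 k x y := by
  have hlt : w + a * y < w + a * x ↔ y < x := by simp [mul_lt_mul_iff_right₀ ha]
  simp only [fdual0, hlt]
  split_ifs with h
  · rw [show w + a * x - (w + a * y) = a * (x - y) by ring,
      Real.mul_rpow ha.le (sub_pos.2 h).le]
  · rw [mul_zero]

@[fun_prop]
lemma Measurable.fdual0 {α : Type*} [MeasurableSpace α] (k : ℝ) {f g : α → ℝ}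
    (hf : Measurable f) (hg : Measurable g) : Measurable fun a => fdual0 k (f a) (g a) :=
  Measurable.ite (measurableSet_lt hg hf) ((hf.sub hg).pow_const _) measurable_const

lemma lintegral_comp_add_mul {f : ℝ → ℝ≥0∞} (hf : Measurable f) (w : ℝ) {a : ℝ} (ha : 0 < a) :
    ∫⁻ x, f x = ENNReal.ofReal a * ∫⁻ u, f (w + a * u) := by
  conv_lhs => rw [← lintegral_add_left_eq_self f w, ← Real.smul_map_volume_mul_left ha.ne']
  rw [lintegral_smul_measure, lintegral_map (by fun_prop) (measurable_const_mul a),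
    abs_of_pos ha, smul_eq_mul]

/-- The Beta integral `B(k, 1-k) = ∫₀¹ x^(k-1) (1-x)^(-k) dx`. -/
noncomputable def betaConst (k : ℝ) : ℝ≥0∞ :=
  ∫⁻ x, ENNReal.ofReal (fdual0 k x 0) * ENNReal.ofReal (fdual0 (1 - k) 1 x)

lemma lintegral_fdual0_mul_fdual0 (k w t : ℝ) :
    ∫⁻ x, ENNReal.ofReal (fdual0 k x w) * ENNReal.ofReal (fdual0 (1 - k) t x)
      = (Iio t).indicator (fun _ => betaConst k) w := by
  rcases lt_or_ge w t with hwt | htw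
  · set a := t - w
    have ha : 0 < a := sub_pos.2 hwt
    rw [indicator_of_mem (mem_Iio.2 hwt), lintegral_comp_add_mul (by fun_prop) w ha,
      ← lintegral_const_mul' _ _ ofReal_ne_top, betaConst]
    refine lintegral_congr fun u => ?_
    have h₁ := fdual0_affine k ha w u 0
    have h₂ := fdual0_affine (1 - k) ha w 1 u
    rw [mul_zero, add_zero] at h₁
    rw [mul_one, show w + a = t by ring] at h₂
    have hscale : a * (a ^ (k - 1) * a ^ (1 - k - 1)) = 1 := by
      nth_rw 1 [← Real.rpow_one a]
      rw [← Real.rpow_add ha, ← Real.rpow_add ha,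
        show 1 + (k - 1 + (1 - k - 1)) = (0 : ℝ) by ring, Real.rpow_zero]
    rw [← ofReal_mul (fdual0_nonneg _ _ _), ← ofReal_mul ha.le, h₁, h₂,
      ← ofReal_mul (fdual0_nonneg _ _ _)]
    congr 1
    linear_combination (fdual0 k u 0 * fdual0 (1 - k) 1 u) * hscale
  · rw [indicator_of_notMem (notMem_Iio.2 htw)]
    have hzero (x : ℝ) :
        ENNReal.ofReal (fdual0 k x w) * ENNReal.ofReal (fdual0 (1 - k) t x) = 0 := by
      rcases le_or_gt x w with hxw | hwx
      · rw [fdual0_of_le k hxw, ofReal_zero, zero_mul]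
      · rw [fdual0_of_le (1 - k) (htw.trans hwx.le), ofReal_zero, mul_zero]
    exact (lintegral_congr hzero).trans lintegral_zero

lemma betaConst_pos (k : ℝ) : 0 < betaConst k := by
  rw [betaConst, lintegral_pos_iff_support (by fun_prop)]
  refine (by simp : 0 < volume (Ioo (0 : ℝ) 1)).trans_le (measure_mono ?_)
  rintro x ⟨hx0, hx1⟩
  have h₁ : 0 < fdual0 k x 0 := by
    rw [fdual0, if_pos hx0]; exact Real.rpow_pos_of_pos (by linarith) _
  have h₂ : 0 < fdual0 (1 - k) 1 x := by
    rw [fdual0, if_pos hx1]; exact Real.rpow_pos_of_pos (by linarith) _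
  simp [Function.mem_support, h₁, h₂]

lemma fdual0_mul_fdual0_le {k : ℝ} (hk0 : 0 < k) (hk1 : k < 1) {x : ℝ}
    (hx : x ∈ Ioo (0 : ℝ) 1) :
    fdual0 k x 0 * fdual0 (1 - k) 1 x ≤ 2 * x ^ (k - 1) + 2 * (1 - x) ^ (-k) := by
  obtain ⟨hx0, hx1⟩ := hx
  rw [fdual0, fdual0, if_pos hx0, if_pos hx1, sub_zero, show 1 - k - 1 = -k by ring]
  have hxk : x ^ (k - 1) ≤ x⁻¹ := by
    rw [← Real.rpow_neg_one]
    exact Real.rpow_le_rpow_of_exponent_ge hx0 hx1.le (by linarith)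
  have hxk' : (1 - x) ^ (-k) ≤ (1 - x)⁻¹ := by
    rw [← Real.rpow_neg_one]
    exact Real.rpow_le_rpow_of_exponent_ge (by linarith) (by linarith) (by linarith)
  have h₁ : 0 ≤ x ^ (k - 1) := Real.rpow_nonneg hx0.le _
  have h₂ : 0 ≤ (1 - x) ^ (-k) := Real.rpow_nonneg (by linarith) _
  rcases le_total x 2⁻¹ with hx | hx
  · have : (1 - x)⁻¹ ≤ 2 := by rw [inv_le_comm₀ (by linarith) two_pos]; linarith
    nlinarith
  · have : x⁻¹ ≤ 2 := by rw [inv_le_comm₀ hx0 two_pos]; exact hx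
    nlinarith

lemma betaConst_lt_top {k : ℝ} (hk0 : 0 < k) (hk1 : k < 1) : betaConst k < ∞ := by
  have hsupp : (Function.support fun x =>
      ENNReal.ofReal (fdual0 k x 0) * ENNReal.ofReal (fdual0 (1 - k) 1 x)) ⊆ Ioo 0 1 := by
    refine Function.support_subset_iff'.2 fun x hx => ?_
    rcases not_and_or.1 hx with h | h
    · simp [fdual0_of_le k (not_lt.1 h)]
    · simp [fdual0_of_le (1 - k) (not_lt.1 h)]
  have hbound :
      IntegrableOn (fun x : ℝ => 2 * x ^ (k - 1) + 2 * (1 - x) ^ (-k)) (Ioo 0 1) := by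
    have h₁ := intervalIntegral.intervalIntegrable_rpow' (a := 0) (b := 1)
      (by linarith : -1 < k - 1)
    have h₂ := (intervalIntegral.intervalIntegrable_rpow' (a := 1) (b := 0)
      (by linarith : -1 < -k)).comp_sub_left 1
    rw [sub_self, sub_zero] at h₂
    exact (intervalIntegrable_iff_integrableOn_Ioo_of_le zero_le_one).1
      ((h₁.const_mul 2).add (h₂.const_mul 2))
  have hint : IntegrableOn (fun x => fdual0 k x 0 * fdual0 (1 - k) 1 x) (Ioo 0 1) :=
    hbound.mono' (by fun_prop) <| (ae_restrict_iff' measurableSet_Ioo).2 <|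
      ae_of_all _ fun x hx => by
        rw [Real.norm_of_nonneg (mul_nonneg (fdual0_nonneg _ _ _) (fdual0_nonneg _ _ _))]
        exact fdual0_mul_fdual0_le hk0 hk1 hx
  rw [betaConst, ← setLIntegral_eq_of_support_subset hsupp]
  simp_rw [← ofReal_mul (fdual0_nonneg _ _ _)]
  exact hint.lintegral_lt_top

lemma lintegral_lintegral_fdual0_mul (k : ℝ) (μ : Measure ℝ) [SFinite μ] (t : ℝ) :
    ∫⁻ x, (∫⁻ w, ENNReal.ofReal (fdual0 k x w) ∂μ) * ENNReal.ofReal (fdual0 (1 - k) t x)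
      = betaConst k * μ (Iio t) :=
  calc ∫⁻ x, (∫⁻ w, ENNReal.ofReal (fdual0 k x w) ∂μ) * ENNReal.ofReal (fdual0 (1 - k) t x)
      = ∫⁻ x, ∫⁻ w, ENNReal.ofReal (fdual0 k x w) * ENNReal.ofReal (fdual0 (1 - k) t x) ∂μ :=
        lintegral_congr fun x => (lintegral_mul_const' _ _ ofReal_ne_top).symm
    _ = ∫⁻ w, ∫⁻ x,
          ENNReal.ofReal (fdual0 k x w) * ENNReal.ofReal (fdual0 (1 - k) t x) ∂volume ∂μ := by
        apply lintegral_lintegral_swap; fun_prop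
    _ = ∫⁻ w, (Iio t).indicator (fun _ => betaConst k) w ∂μ :=
        lintegral_congr fun w => lintegral_fdual0_mul_fdual0 k w t
    _ = betaConst k * μ (Iio t) := by
        rw [lintegral_indicator measurableSet_Iio, setLIntegral_const]

namespace MeasureTheory.Measure

lemma ext_of_Iio (μ ν : Measure ℝ) [IsFiniteMeasure μ] (h : ∀ a, μ (Iio a) = ν (Iio a)) :
    μ = ν := by
  have huniv : μ univ = ν univ := by
    have hfun : (μ ∘ Iio : ℝ → ℝ≥0∞) = ν ∘ Iio := funext h
    rw [← iUnion_Iio]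
    exact tendsto_nhds_unique (tendsto_measure_iUnion_atTop monotone_Iio)
      (hfun ▸ tendsto_measure_iUnion_atTop monotone_Iio)
  refine ext_of_generate_finite _ (BorelSpace.measurable_eq.trans (borel_eq_generateFrom_Iio ℝ))
    isPiSystem_Iio ?_ huniv
  rintro _ ⟨a, rfl⟩
  exact h a

lemma ext_of_lintegral_fdual0 {k : ℝ} (hk0 : 0 < k) (hk1 : k < 1) (μ ν : Measure ℝ)
    [IsFiniteMeasure μ] [IsFiniteMeasure ν]
    (h : ∀ x, ∫⁻ w, ENNReal.ofReal (fdual0 k x w) ∂μ = ∫⁻ w, ENNReal.ofReal (fdual0 k x w) ∂ν) :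
    μ = ν :=
  ext_of_Iio μ ν fun t =>
    (ENNReal.mul_right_inj (betaConst_pos k).ne' (betaConst_lt_top hk0 hk1).ne).1 <| by
      simp_rw [← lintegral_lintegral_fdual0_mul, h]

end MeasureTheory.Measure

/-- The duality relation of the theorem, stated in `ℝ≥0∞` so that Tonelli applies with no
integrability conditions. -/
def IsFdualPair (k : ℝ) (p q : Kernel ℝ ℝ) : Prop :=
  ∀ x y, ∫⁻ w, ENNReal.ofReal (fdual0 k x w) ∂(q y) = ∫⁻ z, ENNReal.ofReal (fdual0 k z y) ∂(p x)

namespace IsFdualPair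

variable {k : ℝ} {p p₁ p₂ q q' q₁ q₂ : Kernel ℝ ℝ}

lemma comp [IsSFiniteKernel p₂] [IsSFiniteKernel q₁] (h₁ : IsFdualPair k p₁ q₁)
    (h₂ : IsFdualPair k p₂ q₂) : IsFdualPair k (p₁ ∘ₖ p₂) (q₂ ∘ₖ q₁) := fun x y =>
  calc ∫⁻ w, ENNReal.ofReal (fdual0 k x w) ∂(q₂ ∘ₖ q₁) y
      = ∫⁻ v, ∫⁻ z, ENNReal.ofReal (fdual0 k z v) ∂(p₂ x) ∂(q₁ y) := by
        rw [Kernel.lintegral_comp _ _ _ (by fun_prop)]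
        simp_rw [h₂ x]
    _ = ∫⁻ z, ∫⁻ v, ENNReal.ofReal (fdual0 k z v) ∂(q₁ y) ∂(p₂ x) := by
        apply lintegral_lintegral_swap; fun_prop
    _ = ∫⁻ u, ENNReal.ofReal (fdual0 k u y) ∂(p₁ ∘ₖ p₂) x := by
        rw [Kernel.lintegral_comp _ _ _ (by fun_prop)]
        simp_rw [h₁ _ y]

lemma unique (hk0 : 0 < k) (hk1 : k < 1) [IsFiniteKernel q] [IsFiniteKernel q']
    (h : IsFdualPair k p q) (h' : IsFdualPair k p q') : q = q' :=
  Kernel.ext fun y =>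
    Measure.ext_of_lintegral_fdual0 hk0 hk1 _ _ fun x => (h x y).trans (h' x y).symm

end IsFdualPair

lemma isFdualPair_of_density {k : ℝ} {p q : Kernel ℝ ℝ} {ρ : ℝ → ℝ → ℝ}
    (hρ_meas : ∀ x, Measurable (ρ x)) (hρ_nonneg : ∀ x z, 0 ≤ ρ x z)
    (hdens : ∀ x, p x = volume.withDensity (fun z => ENNReal.ofReal (ρ x z)))
    (hint_q : ∀ x y, Integrable (fun w => fdual0 k x w) (q y))
    (hint_p : ∀ x y, Integrable (fun z => fdual0 k z y * ρ x z))
    (hdual : ∀ x y, ∫ w, fdual0 k x w ∂(q y) = ∫ z, fdual0 k z y * ρ x z) :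
    IsFdualPair k p q := by
  intro x y
  rw [← ofReal_integral_eq_lintegral_ofReal (hint_q x y) (ae_of_all _ (fdual0_nonneg k x)),
    hdual, ofReal_integral_eq_lintegral_ofReal (hint_p x y)
      (ae_of_all _ fun z => mul_nonneg (fdual0_nonneg k z y) (hρ_nonneg x z)),
    hdens, lintegral_withDensity_eq_lintegral_mul _ (hρ_meas x).ennreal_ofReal (by fun_prop)]
  refine lintegral_congr fun z => ?_
  rw [ofReal_mul (fdual0_nonneg k z y), mul_comm]
  rfl

theorem stmt8_general (k : ℝ) (hk0 : 0 < k) (hk1 : k < 1)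
    (p q : ℝ → Kernel ℝ ℝ)
    (hp_markov : ∀ t, 0 < t → IsMarkovKernel (p t))
    (hq_markov : ∀ t, 0 < t → IsMarkovKernel (q t))
    -- Chapman–Kolmogorov for p
    (hCK : ∀ s t, 0 < s → 0 < t → ∀ x, ∀ A : Set ℝ, MeasurableSet A →
      p (t + s) x A = ∫⁻ z, p s z A ∂(p t x))
    -- bounded jointly measurable densities ρ_t of p_t with respect to Lebesgue measure
    (ρ : ℝ → ℝ → ℝ → ℝ)
    (hρ_meas : ∀ t, 0 < t → Measurable (fun xz : ℝ × ℝ => ρ t xz.1 xz.2))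
    (hρ_nonneg : ∀ t, 0 < t → ∀ x z, 0 ≤ ρ t x z)
    (hdens : ∀ t, 0 < t → ∀ x : ℝ,
      p t x = volume.withDensity (fun z => ENNReal.ofReal (ρ t x z)))
    -- finiteness of both sides of the duality relation
    (hint_q : ∀ t, 0 < t → ∀ x y : ℝ, Integrable (fun w => fdual0 k x w) (q t y))
    (hint_p : ∀ t, 0 < t → ∀ x y : ℝ, Integrable (fun z => fdual0 k z y * ρ t x z) volume)
    -- order-k duality: ∫ f_k(x,w) q_t(y,dw) = ∫ f_k(z,y) ρ_t(x,z) dz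
    (hdual : ∀ t, 0 < t → ∀ x y : ℝ,
      (∫ w, fdual0 k x w ∂(q t y)) = ∫ z, fdual0 k z y * ρ t x z) :
    -- then q satisfies the Chapman–Kolmogorov equations
    ∀ s t, 0 < s → 0 < t → ∀ y, ∀ A : Set ℝ, MeasurableSet A →
      q (t + s) y A = ∫⁻ w, q t w A ∂(q s y) := by
  intro s t hs ht y A hA
  have hts : 0 < t + s := add_pos ht hs
  have := hp_markov t ht
  have := hq_markov s hs
  have := hq_markov t ht
  have := hq_markov (t + s) hts
  have hpq (r : ℝ) (hr : 0 < r) : IsFdualPair k (p r) (q r) :=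
    isFdualPair_of_density (fun x => (hρ_meas r hr).comp measurable_prodMk_left)
      (hρ_nonneg r hr) (hdens r hr) (hint_q r hr) (hint_p r hr) (hdual r hr)
  have hp_comp : p (t + s) = p s ∘ₖ p t := Kernel.ext fun x => Measure.ext fun B hB => by
    rw [hCK s t hs ht x B hB, Kernel.comp_apply' _ _ _ hB]
  have hq_comp : q (t + s) = q t ∘ₖ q s :=
    (hpq (t + s) hts).unique hk0 hk1 (hp_comp ▸ (hpq s hs).comp (hpq t ht))
  rw [hq_comp, Kernel.comp_apply' _ _ _ hA]

theorem stmt8 (k : ℝ) (hk0 : 0 < k) (hk1 : k < 1)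
    (p q : ℝ → Kernel ℝ ℝ)
    (hp_markov : ∀ t, 0 < t → IsMarkovKernel (p t))
    (hq_markov : ∀ t, 0 < t → IsMarkovKernel (q t))
    -- Chapman–Kolmogorov for p
    (hCK : ∀ s t, 0 < s → 0 < t → ∀ x, ∀ A : Set ℝ, MeasurableSet A →
      p (t + s) x A = ∫⁻ z, p s z A ∂(p t x))
    -- bounded jointly measurable densities ρ_t of p_t with respect to Lebesgue measure
    (ρ : ℝ → ℝ → ℝ → ℝ)
    (hρ_meas : ∀ t, 0 < t → Measurable (fun xz : ℝ × ℝ => ρ t xz.1 xz.2))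
    (hρ_nonneg : ∀ t, 0 < t → ∀ x z, 0 ≤ ρ t x z)
    (hρ_bdd : ∀ t, 0 < t → ∃ C : ℝ, ∀ x z, ρ t x z ≤ C)
    (hdens : ∀ t, 0 < t → ∀ x : ℝ,
      p t x = volume.withDensity (fun z => ENNReal.ofReal (ρ t x z)))
    -- finiteness of both sides of the duality relation
    (hint_q : ∀ t, 0 < t → ∀ x y : ℝ, Integrable (fun w => fdual0 k x w) (q t y))
    (hint_p : ∀ t, 0 < t → ∀ x y : ℝ, Integrable (fun z => fdual0 k z y * ρ t x z) volume)
    -- order-k duality: ∫ f_k(x,w) q_t(y,dw) = ∫ f_k(z,y) ρ_t(x,z) dz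
    (hdual : ∀ t, 0 < t → ∀ x y : ℝ,
      (∫ w, fdual0 k x w ∂(q t y)) = ∫ z, fdual0 k z y * ρ t x z) :
    -- then q satisfies the Chapman–Kolmogorov equations
    ∀ s t, 0 < s → 0 < t → ∀ y, ∀ A : Set ℝ, MeasurableSet A →
      q (t + s) y A = ∫⁻ w, q t w A ∂(q s y) :=
  stmt8_general k hk0 hk1 p q hp_markov hq_markov hCK ρ hρ_meas hρ_nonneg hdens hint_q hint_p hdual
end

section
/- Let k ≥ 2 be an integer, let b : ℝ → ℝ be k times continuously differentiable, and let g : ℝ → ℝ be infinitely differentiable with compact support. Then for every y ∈ ℝ: ∫_y^∞ ((x−y)^{k−2}/(k−2)!) b(x) (−1)^k g^{(k)}(x) dx = −b(y) g′(y) + (k−1) b′(y) g(y) + ∫_y^∞ g(x) (d/dx)^k [ ((x−y)^{k−2}/(k−2)!) b(x) ] dx, where (d/dx)^k is taken with y fixed. -/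
/-!
Integrating by parts `k` times on `(y, ∞)` moves the `k` derivatives from `g` onto
`φ(x) = (x - y)^(k-2) / (k-2)! * b(x)`; compact support kills the boundary terms at infinity,
leaving `∑_{j<k} (-1)^(k-1-j) φ^(j)(y) g^(k-1-j)(y)`. By Leibniz' rule `φ^(j)(y)` is
`C(j, k-2) b^(j-k+2)(y)`, which vanishes for `j < k-2`, so only the terms `j = k-2` and `j = k-1`
survive, giving `-b(y) g'(y) + (k-1) b'(y) g(y)`.
-/

open MeasureTheory Set Filter Topology

section TaylorMonomial

variable {𝕜 : Type*} [NontriviallyNormedField 𝕜] [CharZero 𝕜]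

theorem iteratedDeriv_sub_pow_div_factorial_self (m i : ℕ) (y : 𝕜) :
    iteratedDeriv i (fun u => (u - y) ^ m / (m.factorial : 𝕜)) y = if i = m then 1 else 0 := by
  rw [iteratedDeriv_div_const, iteratedDeriv_comp_sub_const i (· ^ m)]
  simp only [sub_self, iteratedDeriv_fun_pow_zero]
  split_ifs <;> simp [Nat.factorial_ne_zero]

theorem iteratedDeriv_sub_pow_div_factorial_mul_self {m j : ℕ} {b : 𝕜 → 𝕜} {y : 𝕜}
    (hb : ContDiffAt 𝕜 j b y) :
    iteratedDeriv j (fun u => (u - y) ^ m / (m.factorial : 𝕜) * b u) y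
      = if m ≤ j then (j.choose m : 𝕜) * iteratedDeriv (j - m) b y else 0 := by
  rw [iteratedDeriv_fun_mul (by fun_prop) hb]
  simp only [iteratedDeriv_sub_pow_div_factorial_self, mul_ite, ite_mul, mul_one, mul_zero,
    zero_mul]
  simp [Finset.sum_ite_eq']

end TaylorMonomial

theorem integral_Ioi_mul_deriv_of_hasCompactSupport {f g : ℝ → ℝ} (hf : ContDiff ℝ 1 f)
    (hg : ContDiff ℝ 1 g) (hgs : HasCompactSupport g) (y : ℝ) :
    ∫ x in Ioi y, f x * deriv g x = -(f y * g y) - ∫ x in Ioi y, deriv f x * g x := by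
  have hfg : HasCompactSupport (f * g) := hgs.mul_left
  have hcont : Continuous (f * g) := hf.continuous.mul hg.continuous
  simpa using integral_Ioi_mul_deriv_eq_deriv_mul
    (fun x _ => (hf.differentiable one_ne_zero x).hasDerivAt)
    (fun x _ => (hg.differentiable one_ne_zero x).hasDerivAt)
    ((hf.continuous.mul (hg.continuous_deriv le_rfl)).integrable_of_hasCompactSupport
      hgs.deriv.mul_left).integrableOn
    (((hf.continuous_deriv le_rfl).mul hg.continuous).integrable_of_hasCompactSupport
      hgs.mul_left).integrableOn
    ((hcont.tendsto y).mono_left nhdsWithin_le_nhds)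
    (hfg.is_zero_at_infty.mono_left atTop_le_cocompact)

theorem integral_Ioi_mul_neg_one_pow_iteratedDeriv_of_hasCompactSupport {n : ℕ} {f g : ℝ → ℝ}
    (hf : ContDiff ℝ n f) (hg : ContDiff ℝ n g) (hgs : HasCompactSupport g) (y : ℝ) :
    ∫ x in Ioi y, f x * ((-1) ^ n * iteratedDeriv n g x)
      = ∑ j ∈ Finset.range n,
          (-1) ^ (n - 1 - j) * iteratedDeriv j f y * iteratedDeriv (n - 1 - j) g y
        + ∫ x in Ioi y, iteratedDeriv n f x * g x := by
  induction n generalizing g with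
  | zero => simp
  | succ n ih =>
    have hf' : ContDiff ℝ n f := hf.of_le (by exact_mod_cast n.le_succ)
    have hfn : ContDiff ℝ 1 (iteratedDeriv n f) := by
      rw [iteratedDeriv_eq_iterate]
      exact_mod_cast (add_comm n 1 ▸ hf).iterate_deriv' 1 n
    have hg1 : ContDiff ℝ 1 g := hg.of_le (by exact_mod_cast Nat.le_add_left 1 n)
    have hshift : ∑ j ∈ Finset.range n,
          (-1) ^ (n - 1 - j) * iteratedDeriv j f y * iteratedDeriv (n - 1 - j) (deriv g) y
        = -∑ j ∈ Finset.range n,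
            (-1) ^ (n - j) * iteratedDeriv j f y * iteratedDeriv (n - j) g y := by
      rw [← Finset.sum_neg_distrib]
      refine Finset.sum_congr rfl fun j hj => ?_
      rw [show n - j = n - 1 - j + 1 by have := Finset.mem_range.mp hj; omega, pow_succ,
        iteratedDeriv_succ']
      ring
    simp only [pow_succ, mul_one, neg_mul, mul_neg, integral_neg, iteratedDeriv_succ' (f := g)]
    rw [ih hf' hg.deriv' hgs.deriv, hshift,
      integral_Ioi_mul_deriv_of_hasCompactSupport hfn hg1 hgs, Finset.sum_range_succ,
      ← iteratedDeriv_succ]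
    simp only [Nat.add_sub_cancel, Nat.sub_self, pow_zero, iteratedDeriv_zero]
    ring

/-- Integration-by-parts identity for the k-th order dual of the drift operator `b(x) d/dx`. -/
theorem stmt13 (k : ℕ) (hk : 2 ≤ k)
    (b : ℝ → ℝ) (hb : ContDiff ℝ (k : ℕ∞) b)
    (g : ℝ → ℝ) (hg : ContDiff ℝ (⊤ : ℕ∞) g) (hgs : HasCompactSupport g) (y : ℝ) :
    (∫ x in Set.Ioi y,
        (x - y) ^ (k - 2) / (Nat.factorial (k - 2) : ℝ) * b x
          * ((-1 : ℝ) ^ k * iteratedDeriv k g x))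
      = -(b y * deriv g y) + ((k : ℝ) - 1) * deriv b y * g y
        + ∫ x in Set.Ioi y,
            g x * iteratedDeriv k
              (fun u => (u - y) ^ (k - 2) / (Nat.factorial (k - 2) : ℝ) * b u) x := by
  obtain ⟨m, rfl⟩ : ∃ m, k = m + 2 := ⟨k - 2, by omega⟩
  simp only [Nat.add_sub_cancel]
  have hb' : ContDiff ℝ (m + 2 : ℕ) b := by exact_mod_cast hb
  have hg' : ContDiff ℝ (m + 2 : ℕ) g := hg.of_le (WithTop.coe_le_coe.mpr le_top)
  have hφ_at : ∀ j < m + 2,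
      iteratedDeriv j (fun u => (u - y) ^ m / (m.factorial : ℝ) * b u) y
        = if m ≤ j then (j.choose m : ℝ) * iteratedDeriv (j - m) b y else 0 := fun j hj =>
    iteratedDeriv_sub_pow_div_factorial_mul_self ((hb'.of_le (by exact_mod_cast hj.le)).contDiffAt)
  have hφ_below : ∀ j ∈ Finset.range m, (-1) ^ (m + 2 - 1 - j)
      * iteratedDeriv j (fun u => (u - y) ^ m / (m.factorial : ℝ) * b u) y
      * iteratedDeriv (m + 2 - 1 - j) g y = 0 := fun j hj => by
    have := Finset.mem_range.mp hj
    rw [hφ_at j (by omega), if_neg (by omega), mul_zero, zero_mul]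
  have key := integral_Ioi_mul_neg_one_pow_iteratedDeriv_of_hasCompactSupport
    (f := fun u => (u - y) ^ m / (m.factorial : ℝ) * b u) (by fun_prop) hg' hgs y
  beta_reduce at key
  simp_rw [mul_comm (g _)]
  rw [key, Finset.sum_range_succ, Finset.sum_range_succ, Finset.sum_eq_zero hφ_below,
    hφ_at m (by omega), hφ_at (m + 1) (by omega), if_pos le_rfl, if_pos m.le_succ]
  simp only [Nat.choose_self, Nat.choose_succ_self_right, Nat.sub_self,
    show m + 2 - 1 - m = 1 by omega, show m + 1 - m = 1 by omega,
    show m + 2 - 1 - (m + 1) = 0 by omega, iteratedDeriv_zero, iteratedDeriv_one]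
  push_cast
  ring
end

section
/- Let k ≥ 3 be an integer, let a : ℝ → ℝ be k times continuously differentiable, and let g : ℝ → ℝ be infinitely differentiable with compact support. Then for every y ∈ ℝ: ∫_y^∞ ((x−y)^{k−3}/(k−3)!) a(x) (−1)^k g^{(k)}(x) dx = a(y) g″(y) − (k−2) a′(y) g′(y) + ((k−1)(k−2)/2) a″(y) g(y) + ∫_y^∞ g(x) (d/dx)^k [ ((x−y)^{k−3}/(k−3)!) a(x) ] dx, where (d/dx)^k is taken with y fixed. -/
/-!
Integrate by parts `k` times on `(y, ∞)`, moving every derivative from `g` onto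
`F x = (x - y) ^ (k - 3) / (k - 3)! * a x`; since `g` has compact support only boundary terms
at `y` appear. By the Leibniz rule the `j`-th derivative of `F` at `y` is
`j.choose (k - 3) * iteratedDeriv (j - (k - 3)) a y`, which vanishes for `j < k - 3`, so only
the three boundary terms with `j = k - 3, k - 2, k - 1` survive.
-/

open MeasureTheory Finset

theorem integral_Ioi_deriv_mul_of_hasCompactSupport {u v : ℝ → ℝ} (hu : ContDiff ℝ 1 u)
    (hv : ContDiff ℝ 1 v) (hvs : HasCompactSupport v) (y : ℝ) :
    ∫ x in Set.Ioi y, deriv v x * u x = -(v y * u y) - ∫ x in Set.Ioi y, v x * deriv u x := by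
  have hud := hu.differentiable one_ne_zero
  have hvd := hv.differentiable one_ne_zero
  have hint₁ : IntegrableOn (fun x => deriv v x * u x) (Set.Ioi y) :=
    ((hv.continuous_deriv le_rfl).mul hu.continuous).integrable_of_hasCompactSupport
      hvs.deriv.mul_right |>.integrableOn
  have hint₂ : IntegrableOn (fun x => v x * deriv u x) (Set.Ioi y) :=
    (hv.continuous.mul (hu.continuous_deriv le_rfl)).integrable_of_hasCompactSupport
      hvs.mul_right |>.integrableOn
  have hFTC := hvs.mul_right.integral_Ioi_deriv_eq (hv.mul hu) y
  simp only [deriv_fun_mul (hvd _) (hud _)] at hFTC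
  rw [integral_add hint₁ hint₂] at hFTC
  linarith

theorem integral_Ioi_mul_iteratedDeriv_of_hasCompactSupport {n : ℕ} {u v : ℝ → ℝ}
    (hu : ContDiff ℝ n u) (hv : ContDiff ℝ n v) (hvs : HasCompactSupport v) (y : ℝ) :
    ∫ x in Set.Ioi y, u x * ((-1) ^ n * iteratedDeriv n v x)
      = ∑ j ∈ range n, (-1) ^ j * iteratedDeriv (n - 1 - j) u y * iteratedDeriv j v y
        + ∫ x in Set.Ioi y, v x * iteratedDeriv n u x := by
  induction n generalizing v with
  | zero => simp [mul_comm]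
  | succ n ih =>
    have hun : ContDiff ℝ 1 (iteratedDeriv n u) := by
      rw [iteratedDeriv_eq_iterate]
      exact ContDiff.iterate_deriv' 1 n (by rwa [add_comm])
    have hpeel : ∫ x in Set.Ioi y, u x * ((-1) ^ (n + 1) * iteratedDeriv (n + 1) v x)
        = -∫ x in Set.Ioi y, u x * ((-1) ^ n * iteratedDeriv n (deriv v) x) := by
      rw [← integral_neg]
      congr 1 with x
      rw [iteratedDeriv_succ', pow_succ]
      ring
    rw [hpeel, ih (hu.of_le (by norm_cast; omega)) hv.deriv' hvs.deriv,
      integral_Ioi_deriv_mul_of_hasCompactSupport hun (hv.of_le (by norm_cast; omega)) hvs,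
      sum_range_succ', ← iteratedDeriv_succ]
    simp only [iteratedDeriv_succ', Nat.add_sub_cancel, Nat.sub_zero, Nat.sub_sub, Nat.add_comm 1,
      pow_succ, pow_zero, iteratedDeriv_zero, mul_neg_one, neg_mul, sum_neg_distrib]
    ring

section MonomialMul

variable {𝕜 : Type*} [NontriviallyNormedField 𝕜] [CharZero 𝕜]

theorem iteratedDeriv_pow_sub_div_factorial_self (m i : ℕ) (y : 𝕜) :
    iteratedDeriv i (fun x => (x - y) ^ m / (m.factorial : 𝕜)) y = if i = m then 1 else 0 := by
  have hshift := congrFun (iteratedDeriv_comp_sub_const i (fun x : 𝕜 => x ^ m) y) y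
  simp only [sub_self] at hshift
  rw [iteratedDeriv_div_const, hshift, iteratedDeriv_fun_pow_zero]
  split_ifs <;> simp [Nat.factorial_ne_zero]

-- For `j < m` the truncated subtraction `j - m` is harmless: the binomial coefficient vanishes.
theorem iteratedDeriv_pow_sub_div_factorial_mul_self {j : ℕ} {f : 𝕜 → 𝕜} {y : 𝕜}
    (hf : ContDiffAt 𝕜 j f y) (m : ℕ) :
    iteratedDeriv j (fun x => (x - y) ^ m / (m.factorial : 𝕜) * f x) y
      = j.choose m * iteratedDeriv (j - m) f y := by
  rw [iteratedDeriv_fun_mul (by fun_prop) hf]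
  simp only [iteratedDeriv_pow_sub_div_factorial_self, mul_ite, ite_mul, mul_one, mul_zero,
    zero_mul, sum_ite_eq', mem_range]
  split_ifs with hm
  · rfl
  · simp [Nat.choose_eq_zero_of_lt (by omega : j < m)]

end MonomialMul

/-- Integration-by-parts identity for the k-th order dual of the diffusion operator
`a(x) d²/dx²`. -/
theorem stmt14 (k : ℕ) (hk : 3 ≤ k)
    (a : ℝ → ℝ) (ha : ContDiff ℝ (k : ℕ∞) a)
    (g : ℝ → ℝ) (hg : ContDiff ℝ (⊤ : ℕ∞) g) (hgs : HasCompactSupport g) (y : ℝ) :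
    (∫ x in Set.Ioi y,
        (x - y) ^ (k - 3) / (Nat.factorial (k - 3) : ℝ) * a x
          * ((-1 : ℝ) ^ k * iteratedDeriv k g x))
      = a y * iteratedDeriv 2 g y - ((k : ℝ) - 2) * deriv a y * deriv g y
        + ((k : ℝ) - 1) * ((k : ℝ) - 2) / 2 * iteratedDeriv 2 a y * g y
        + ∫ x in Set.Ioi y,
            g x * iteratedDeriv k
              (fun u => (u - y) ^ (k - 3) / (Nat.factorial (k - 3) : ℝ) * a u) x := by
  obtain ⟨m, rfl⟩ : ∃ m, k = m + 3 := ⟨k - 3, by omega⟩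
  simp only [Nat.add_sub_cancel]
  have ha' : ContDiff ℝ (m + 3 : ℕ) a := ha
  have hFy (j : ℕ) (hj : j ≤ m + 3) :
      iteratedDeriv j (fun u => (u - y) ^ m / (m.factorial : ℝ) * a u) y
        = j.choose m * iteratedDeriv (j - m) a y :=
    iteratedDeriv_pow_sub_div_factorial_mul_self (ha'.contDiffAt.of_le (by exact_mod_cast hj)) m
  rw [integral_Ioi_mul_iteratedDeriv_of_hasCompactSupport (by fun_prop)
    (hg.of_le (WithTop.coe_le_coe.mpr le_top)) hgs y]
  congr 1
  rw [sum_range_succ', sum_range_succ', sum_range_succ', sum_eq_zero, hFy _ (by omega),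
    hFy _ (by omega), hFy _ (by omega)]
  · have hchoose : ((m + 2).choose m : ℝ) = (m + 2) * (m + 1) / 2 := by
      rw [Nat.choose_symm_add, Nat.cast_choose_two]
      push_cast
      ring
    norm_num [hchoose]
    ring
  · intro j hj
    rw [mem_range] at hj
    rw [hFy _ (by omega), Nat.choose_eq_zero_of_lt (by omega)]
    simp
end

section
/- Let k ≥ 1 be an integer and let μ be a finite Borel measure on ℝ such that h(x) = ∫_ℝ f_k(x,w) μ(dw) is finite for every x ∈ ℝ. Then all k-th order forward finite differences of h are nonnegative: for every x ∈ ℝ and every δ > 0, Σ_{j=0}^{k} (−1)^{k−j} C(k,j) h(x + jδ) ≥ 0, where C(k,j) is the binomial coefficient. (In particular, if a Markov family on ℝ admits a dual of order k, so that E(X_t^x − y)_+^{k−1} = ∫ f_k(x,w) q_t(y,dw) for Markov kernels q_t, then it is stochastically monotone of order k in the finite-difference sense.) -/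
/-!
For `m ≥ 1`, `x ↦ f_{m+1}(x, w) = ((x - w)₊)^m` has right derivative `m f_m(x, w)` everywhere, so
`Δ_δ f_{m+1}(·, w) (y) = m ∫₀^δ f_m(y + s, w) ds`. Forward differences commute with translations
and with integration, so `Δ_δ^[m+1] f_{m+1}(·, w)` is `m` times an integral of translates of
`Δ_δ^[m] f_m(·, w)`; by induction on `k` every `Δ_δ^[k] f_k(·, w)` is nonnegative, starting from
the monotonicity of the indicator `f_1(·, w)`. Finally `Δ_δ^[k] h = ∫ Δ_δ^[k] f_k(·, w) μ(dw)`.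
-/

open MeasureTheory

/-- The duality function of integer order `k ≥ 1`: `f_k(x,y) = (x-y)^{k-1}` for `x > y`,
`0` for `x < y`, with `f_k(x,x) = 0` for `k > 1` and `f_1(x,y) = 1_{x ≥ y}`. -/
noncomputable def fdualNat (k : ℕ) (x y : ℝ) : ℝ :=
  if k = 1 then (if y ≤ x then 1 else 0) else (if y < x then (x - y) ^ (k - 1) else 0)

open Set

theorem fwdDiff_iter_eq_sum_mul_shift {R : Type*} [Ring R] (h : R) (f : R → R) (n : ℕ) (y : R) :
    (fwdDiff h)^[n] f y =
      ∑ j ∈ Finset.range (n + 1), (-1 : R) ^ (n - j) * (n.choose j : R) * f (y + j * h) := by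
  rw [fwdDiff_iter_eq_sum_shift]
  refine Finset.sum_congr rfl fun j _ => ?_
  rw [zsmul_eq_mul, nsmul_eq_mul]
  push_cast
  rfl

theorem fwdDiff_iter_integral {M α E : Type*} [AddCommMonoid M] [MeasurableSpace α]
    [NormedAddCommGroup E] [NormedSpace ℝ E] {μ : Measure α} (h : M) {F : M → α → E}
    (hF : ∀ x, Integrable (F x) μ) (n : ℕ) (x : M) :
    (fwdDiff h)^[n] (fun x => ∫ w, F x w ∂μ) x = ∫ w, (fwdDiff h)^[n] (F · w) x ∂μ := by
  induction n generalizing F with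
  | zero => rfl
  | succ n ih =>
    have hΔ : fwdDiff h (fun x => ∫ w, F x w ∂μ) = fun x => ∫ w, fwdDiff h (F · w) x ∂μ :=
      funext fun x => (integral_sub (hF (x + h)) (hF x)).symm
    rw [Function.iterate_succ_apply, hΔ,
      ih (F := fun x w => fwdDiff h (F · w) x) fun x => (hF (x + h)).sub (hF x)]
    rfl

theorem fdualNat_of_lt (k : ℕ) {x w : ℝ} (h : x < w) : fdualNat k x w = 0 := by
  simp [fdualNat, h.not_ge, h.not_gt]

theorem fdualNat_of_le {k : ℕ} (hk : 1 ≤ k) {x w : ℝ} (h : w ≤ x) :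
    fdualNat k x w = (x - w) ^ (k - 1) := by
  rcases h.lt_or_eq with h | rfl
  · by_cases hk1 : k = 1 <;> simp [fdualNat, hk1, h, h.le]
  · by_cases hk1 : k = 1
    · simp [fdualNat, hk1]
    · simp [fdualNat, hk1, zero_pow (by omega : k - 1 ≠ 0)]

theorem fdualNat_nonneg (k : ℕ) (x w : ℝ) : 0 ≤ fdualNat k x w := by
  unfold fdualNat
  split_ifs <;> first | exact pow_nonneg (by linarith) _ | norm_num

theorem fdualNat_monotone {k : ℕ} (hk : 1 ≤ k) (w : ℝ) : Monotone (fdualNat k · w) := by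
  intro a b hab
  change fdualNat k a w ≤ fdualNat k b w
  rcases lt_or_ge a w with ha | ha
  · exact (fdualNat_of_lt k ha).trans_le (fdualNat_nonneg k b w)
  · rw [fdualNat_of_le hk ha, fdualNat_of_le hk (ha.trans hab)]
    exact pow_le_pow_left₀ (by linarith) (by linarith) _

theorem fdualNat_succ_eq_max_pow {m : ℕ} (hm : 1 ≤ m) (x w : ℝ) :
    fdualNat (m + 1) x w = max (x - w) 0 ^ m := by
  rcases lt_or_ge x w with h | h
  · rw [fdualNat_of_lt _ h, max_eq_right (by linarith), zero_pow (by omega)]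
  · rw [fdualNat_of_le (by omega) h, max_eq_left (by linarith), Nat.add_sub_cancel]

theorem hasDerivWithinAt_fdualNat_succ {m : ℕ} (hm : 1 ≤ m) (w t : ℝ) :
    HasDerivWithinAt (fdualNat (m + 1) · w) (m * fdualNat m t w) (Ioi t) t := by
  rcases lt_or_ge t w with ht | ht
  · have hzero : (fdualNat (m + 1) · w) =ᶠ[nhds t] fun _ => 0 := by
      filter_upwards [Iio_mem_nhds ht] with s hs using fdualNat_of_lt _ hs
    rw [fdualNat_of_lt m ht, mul_zero]
    exact ((hasDerivAt_const t (0 : ℝ)).congr_of_eventuallyEq hzero).hasDerivWithinAt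
  · have hpow : HasDerivAt (fun s => (s - w) ^ m) (m * (t - w) ^ (m - 1)) t :=
      (hasDerivAt_pow m (t - w)).comp_sub_const t w
    rw [fdualNat_of_le hm ht]
    refine hpow.hasDerivWithinAt.congr (fun s hs => ?_) ?_
    · rw [fdualNat_of_le (by omega) (ht.trans (le_of_lt hs)), Nat.add_sub_cancel]
    · rw [fdualNat_of_le (by omega) ht, Nat.add_sub_cancel]

theorem fwdDiff_fdualNat_succ {m : ℕ} (hm : 1 ≤ m) {δ : ℝ} (hδ : 0 ≤ δ) (w : ℝ) :
    fwdDiff δ (fdualNat (m + 1) · w) = (m : ℝ) • fun y => ∫ s in Ioc 0 δ, fdualNat m (y + s) w := by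
  funext y
  have hcont : Continuous (fdualNat (m + 1) · w) := by
    simp only [fdualNat_succ_eq_max_pow hm]
    fun_prop
  have hftc := intervalIntegral.integral_eq_sub_of_hasDeriv_right_of_le (by linarith)
    hcont.continuousOn (fun t _ => hasDerivWithinAt_fdualNat_succ hm w t)
    ((fdualNat_monotone hm w).intervalIntegrable.const_mul (m : ℝ) :
      IntervalIntegrable _ _ y (y + δ))
  have hshift := intervalIntegral.integral_comp_add_left (fdualNat m · w) y (a := 0) (b := δ)
  rw [add_zero] at hshift
  rw [intervalIntegral.integral_const_mul, ← hshift, intervalIntegral.integral_of_le hδ] at hftc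
  exact hftc.symm

theorem fdualNat_fwdDiff_iter_nonneg {k : ℕ} (hk : 1 ≤ k) {δ : ℝ} (hδ : 0 ≤ δ) (w x : ℝ) :
    0 ≤ (fwdDiff δ)^[k] (fdualNat k · w) x := by
  induction k, hk using Nat.le_induction generalizing x with
  | base => exact sub_nonneg.2 (fdualNat_monotone le_rfl w (by linarith))
  | succ m hm ih =>
    have hint : ∀ y, Integrable (fun s => fdualNat m (y + s) w) (volume.restrict (Ioc 0 δ)) :=
      fun y => (intervalIntegrable_iff_integrableOn_Ioc_of_le hδ).1
        ((fdualNat_monotone hm w).comp (monotone_id.const_add y)).intervalIntegrable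
    rw [Function.iterate_succ_apply, fwdDiff_fdualNat_succ hm hδ, fwdDiff_iter_const_smul,
      Pi.smul_apply, smul_eq_mul, fwdDiff_iter_integral _ hint]
    refine mul_nonneg (Nat.cast_nonneg m) (integral_nonneg fun s => ?_)
    rw [fwdDiff_iter_comp_add δ (fdualNat m · w)]
    exact ih (x + s)

theorem stmt15_general (k : ℕ) (hk : 1 ≤ k)
    (μ : Measure ℝ)
    (hint : ∀ x : ℝ, Integrable (fun w => fdualNat k x w) μ) :
    ∀ x : ℝ, ∀ δ : ℝ, 0 < δ →
      0 ≤ ∑ j ∈ Finset.range (k + 1),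
        (-1 : ℝ) ^ (k - j) * (k.choose j : ℝ) * ∫ w, fdualNat k (x + j * δ) w ∂μ := by
  intro x δ hδ
  rw [← fwdDiff_iter_eq_sum_mul_shift δ fun y => ∫ w, fdualNat k y w ∂μ,
    fwdDiff_iter_integral δ hint]
  exact integral_nonneg fun w => fdualNat_fwdDiff_iter_nonneg hk hδ.le w x

/-- If `h(x) = ∫ f_k(x,w) μ(dw)` is finite for a finite measure `μ`, then all
k-th order forward finite differences of `h` are nonnegative (stochastic monotonicity
of order `k` of any family admitting a dual of order `k`). -/
theorem stmt15 (k : ℕ) (hk : 1 ≤ k)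
    (μ : Measure ℝ) [IsFiniteMeasure μ]
    (hint : ∀ x : ℝ, Integrable (fun w => fdualNat k x w) μ) :
    ∀ x : ℝ, ∀ δ : ℝ, 0 < δ →
      0 ≤ ∑ j ∈ Finset.range (k + 1),
        (-1 : ℝ) ^ (k - j) * (k.choose j : ℝ) * ∫ w, fdualNat k (x + j * δ) w ∂μ :=
  stmt15_general k hk μ hint
end
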